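/- arXiv:2508.05297 — 2 statements merged into one kernel-verified Lean document; each statement's English description precedes it below -/
import Mathlib

section
/- Let (Ω, F, P) be a probability space with filtration (F_t)_{t≥0}, let f : ℝ^d → ℝ be differentiable, L-smooth (L > 0), and bounded below by f* ∈ ℝ. Let T ≥ 1, σ ≥ 0, let b_t ≥ 1 be batch sizes and let learning rates satisfy η_t ∈ [η_min, η_max] ⊆ [0, 2/L) with Σ_{t=0}^{T−1} η_t ≠ 0. Let θ_0 ∈ ℝ^d be deterministic and let (θ_t) and (g_t) be ℝ^d-valued processes with θ_t F_t-measurable, g_t square-integrable, satisfying almost surely E[g_t | F_t] = ∇f(θ_t), E[‖g_t − ∇f(θ_t)‖² | F_t] ≤ σ²/b_t, and θ_{t+1} = θ_t − η_t g_t. Then min_{0 ≤ t ≤ T−1} E[‖∇f(θ_t)‖²] ≤ (2(f(θ_0) − f*)/(2 − L η_max)) · (1/Σ_{t=0}^{T−1} η_t) + (L σ²/(2 − L η_max)) · (Σ_{t=0}^{T−1} η_t²/b_t)/(Σ_{t=0}^{T−1} η_t). -/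
open MeasureTheory InnerProductSpace Finset
open scoped RealInnerProductSpace Gradient

/-!
By the descent lemma, one step gives
`f θ_{t+1} ≤ f θ_t - η_t ⟪∇f θ_t, g_t⟫ + (L/2) η_t² ‖g_t‖²`. Conditioning on `ℱ_t`, unbiasedness
turns the expected cross term into `E‖∇f θ_t‖²` and splits `E‖g_t‖²` into `E‖∇f θ_t‖²` plus the
variance, at most `σ²/b_t`. As `η_t ≤ η_max`, `η_t - L η_t²/2 ≥ (2 - L η_max) η_t / 2`, so summing
over `t < T` telescopes `E f θ_t` down to `f θ₀ - f*` and bounds the `η`-weighted average of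
`E‖∇f θ_t‖²`, hence their minimum.
-/

section Smooth

variable {E : Type*} [NormedAddCommGroup E] [InnerProductSpace ℝ E] [CompleteSpace E]
  {f : E → ℝ} {L : ℝ}

theorem lipschitzWith_gradient (hgrad : ∀ x y, ‖∇ f x - ∇ f y‖ ≤ L * ‖x - y‖) :
    LipschitzWith L.toNNReal (∇ f) :=
  LipschitzWith.of_dist_le' fun x y => by simpa [dist_eq_norm] using hgrad x y

theorem hasDerivAt_comp_add_smul (hf : Differentiable ℝ f) (x v : E) (s : ℝ) :
    HasDerivAt (fun s : ℝ => f (x + s • v)) ⟪∇ f (x + s • v), v⟫ s := by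
  have hline : HasDerivAt (fun s : ℝ => x + s • v) v s := by
    simpa using ((hasDerivAt_id s).smul_const v).const_add x
  simpa [Function.comp_def, inner_gradient_left] using
    (hf (x + s • v)).hasFDerivAt.comp_hasDerivAt s hline

theorem inner_gradient_add_smul_sub_le (hgrad : ∀ x y, ‖∇ f x - ∇ f y‖ ≤ L * ‖x - y‖) (x v : E)
    {s : ℝ} (hs : 0 ≤ s) : ⟪∇ f (x + s • v) - ∇ f x, v⟫ ≤ L * s * ‖v‖ ^ 2 :=
  calc ⟪∇ f (x + s • v) - ∇ f x, v⟫ ≤ ‖∇ f (x + s • v) - ∇ f x‖ * ‖v‖ := real_inner_le_norm _ _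
    _ ≤ L * ‖s • v‖ * ‖v‖ := by gcongr; simpa using hgrad (x + s • v) x
    _ = L * s * ‖v‖ ^ 2 := by rw [norm_smul, Real.norm_of_nonneg hs]; ring

theorem le_add_inner_gradient_add_sq (hf : Differentiable ℝ f)
    (hgrad : ∀ x y, ‖∇ f x - ∇ f y‖ ≤ L * ‖x - y‖) (x v : E) :
    f (x + v) ≤ f x + ⟪∇ f x, v⟫ + L / 2 * ‖v‖ ^ 2 := by
  set φ : ℝ → ℝ := fun s => f (x + s • v) - s * ⟪∇ f x, v⟫ - L / 2 * ‖v‖ ^ 2 * s ^ 2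
  have hφ : ∀ s, HasDerivAt φ (⟪∇ f (x + s • v) - ∇ f x, v⟫ - L * s * ‖v‖ ^ 2) s := by
    intro s
    refine (((hasDerivAt_comp_add_smul hf x v s).sub ((hasDerivAt_id s).mul_const _)).sub
      ((hasDerivAt_pow 2 s).const_mul (L / 2 * ‖v‖ ^ 2))).congr_deriv ?_
    rw [inner_sub_left]; simp only [Nat.cast_ofNat]; ring
  have hanti : AntitoneOn φ (Set.Icc 0 1) := by
    refine antitoneOn_of_deriv_nonpos (convex_Icc 0 1)
      (fun s _ => (hφ s).continuousAt.continuousWithinAt)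
      (fun s _ => (hφ s).differentiableAt.differentiableWithinAt) fun s hs => ?_
    rw [interior_Icc] at hs
    rw [(hφ s).deriv, sub_nonpos]
    exact inner_gradient_add_smul_sub_le hgrad x v hs.1.le
  have h01 := hanti (by simp) (by simp) zero_le_one
  simp only [φ, one_smul, zero_smul, add_zero, one_mul, zero_mul, one_pow, mul_one, sub_zero,
    ne_eq, OfNat.ofNat_ne_zero, not_false_eq_true, zero_pow, mul_zero] at h01
  linarith

end Smooth

section Integrability

variable {Ω : Type*} {m0 : MeasurableSpace Ω} {μ : Measure Ω}

theorem LipschitzWith.comp_memLp_of_isFiniteMeasure [IsFiniteMeasure μ] {E F : Type*}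
    [NormedAddCommGroup E] [NormedAddCommGroup F] {K : NNReal} {g : E → F} {θ : Ω → E}
    {p : ENNReal} (hg : LipschitzWith K g) (hθ : MemLp θ p μ) : MemLp (g ∘ θ) p μ := by
  refine ((memLp_const ‖g 0‖).add (hθ.norm.const_mul K)).of_le
    (hg.continuous.comp_aestronglyMeasurable hθ.1) (ae_of_all _ fun ω => ?_)
  have hlip : ‖g (θ ω) - g 0‖ ≤ K * ‖θ ω‖ := by simpa using hg.norm_sub_le (θ ω) 0
  have hnonneg : 0 ≤ ‖g 0‖ + K * ‖θ ω‖ := by positivity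
  simp only [Function.comp_apply, Pi.add_apply, Real.norm_of_nonneg hnonneg]
  linarith [norm_le_insert' (g (θ ω)) (g 0)]

variable {E : Type*} [NormedAddCommGroup E] [InnerProductSpace ℝ E]

theorem MeasureTheory.MemLp.integrable_inner {X Y : Ω → E} (hX : MemLp X 2 μ)
    (hY : MemLp Y 2 μ) : Integrable (fun ω => ⟪X ω, Y ω⟫) μ :=
  (L2.integrable_inner (𝕜 := ℝ) (hX.toLp X) (hY.toLp Y)).congr <| by
    filter_upwards [hX.coeFn_toLp, hY.coeFn_toLp] with ω hXω hYω
    rw [hXω, hYω]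

theorem memLp_of_forall_ae_eq_sub_smul {p : ENNReal} {θ g : ℕ → Ω → E} {η : ℕ → ℝ}
    (h0 : MemLp (θ 0) p μ) (hg : ∀ t, MemLp (g t) p μ)
    (hupd : ∀ t, ∀ᵐ ω ∂μ, θ (t + 1) ω = θ t ω - η t • g t ω) (t : ℕ) : MemLp (θ t) p μ := by
  induction t with
  | zero => exact h0
  | succ t ih => exact (ih.sub ((hg t).const_smul (η t))).ae_eq (Filter.EventuallyEq.symm (hupd t))

/-- By the descent lemma at `0`, `f` grows at most quadratically. -/
theorem integrable_comp_of_lipschitz_gradient [CompleteSpace E] [IsFiniteMeasure μ]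
    {f : E → ℝ} {L c : ℝ} (hf : Differentiable ℝ f)
    (hgrad : ∀ x y, ‖∇ f x - ∇ f y‖ ≤ L * ‖x - y‖) (hbound : ∀ x, c ≤ f x) {θ : Ω → E}
    (hθ : MemLp θ 2 μ) : Integrable (fun ω => f (θ ω)) μ := by
  have hmajor : Integrable
      (fun ω => |c| + |f 0| + ‖∇ f 0‖ * ‖θ ω‖ + |L| / 2 * ‖θ ω‖ ^ 2) μ :=
    (((integrable_const _).add ((hθ.norm.integrable one_le_two).const_mul _)).add
      (hθ.norm.integrable_sq.const_mul _))
  refine hmajor.mono' (hf.continuous.comp_aestronglyMeasurable hθ.1) (ae_of_all _ fun ω => ?_)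
  have hdescent := le_add_inner_gradient_add_sq hf hgrad 0 (θ ω)
  rw [zero_add] at hdescent
  have hinner := real_inner_le_norm (∇ f 0) (θ ω)
  have hL : L / 2 * ‖θ ω‖ ^ 2 ≤ |L| / 2 * ‖θ ω‖ ^ 2 := by gcongr; exact le_abs_self L
  have hlin : 0 ≤ ‖∇ f 0‖ * ‖θ ω‖ := by positivity
  have hquad : 0 ≤ |L| / 2 * ‖θ ω‖ ^ 2 := by positivity
  rw [Real.norm_eq_abs, abs_le]
  constructor
  · linarith [hbound (θ ω), neg_abs_le c, abs_nonneg (f 0)]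
  · linarith [abs_nonneg c, le_abs_self (f 0)]

end Integrability

section ConditionalExpectation

variable {Ω E : Type*} {m m0 : MeasurableSpace Ω} {μ : Measure Ω}
  [NormedAddCommGroup E] [InnerProductSpace ℝ E] [CompleteSpace E]

theorem integral_le_of_ae_condExp_le [IsProbabilityMeasure μ] (hm : m ≤ m0) {φ : Ω → ℝ} {c : ℝ}
    (h : ∀ᵐ ω ∂μ, μ[φ | m] ω ≤ c) : ∫ ω, φ ω ∂μ ≤ c := by
  rw [← integral_condExp hm]
  simpa using integral_mono_ae integrable_condExp (integrable_const c) h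

variable [IsFiniteMeasure μ]

theorem integral_inner_eq_integral_norm_sq_of_condExp (hm : m ≤ m0) {X Y : Ω → E}
    (hXm : StronglyMeasurable[m] X) (hX : MemLp X 2 μ) (hY : MemLp Y 2 μ)
    (hYX : μ[Y | m] =ᵐ[μ] X) : ∫ ω, ⟪X ω, Y ω⟫ ∂μ = ∫ ω, ‖X ω‖ ^ 2 ∂μ := by
  have hpull : μ[fun ω => ⟪X ω, Y ω⟫ | m] =ᵐ[μ] fun ω => ⟪X ω, μ[Y | m] ω⟫ :=
    condExp_bilin_of_stronglyMeasurable_left (innerSL ℝ) hXm (hX.integrable_inner hY)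
      (hY.integrable one_le_two)
  calc ∫ ω, ⟪X ω, Y ω⟫ ∂μ = ∫ ω, μ[fun ω => ⟪X ω, Y ω⟫ | m] ω ∂μ := (integral_condExp hm).symm
    _ = ∫ ω, ⟪X ω, X ω⟫ ∂μ := by
        refine integral_congr_ae ?_
        filter_upwards [hpull, hYX] with ω hω hYXω
        rw [hω, hYXω]
    _ = ∫ ω, ‖X ω‖ ^ 2 ∂μ := by simp_rw [real_inner_self_eq_norm_sq]

theorem integral_norm_sq_eq_add_of_condExp (hm : m ≤ m0) {X Y : Ω → E}
    (hXm : StronglyMeasurable[m] X) (hX : MemLp X 2 μ) (hY : MemLp Y 2 μ)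
    (hYX : μ[Y | m] =ᵐ[μ] X) :
    ∫ ω, ‖Y ω‖ ^ 2 ∂μ = ∫ ω, ‖X ω‖ ^ 2 ∂μ + ∫ ω, ‖Y ω - X ω‖ ^ 2 ∂μ := by
  have hcross := integral_inner_eq_integral_norm_sq_of_condExp hm hXm hX hY hYX
  have hexpand : ∀ ω, ‖Y ω - X ω‖ ^ 2 = ‖Y ω‖ ^ 2 - 2 * ⟪X ω, Y ω⟫ + ‖X ω‖ ^ 2 := fun ω => by
    rw [norm_sub_sq_real, real_inner_comm]
  have hXX := hX.norm.integrable_sq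
  have hYY := hY.norm.integrable_sq
  have hXY := (hX.integrable_inner hY).const_mul 2
  have hdiff : Integrable (fun ω => ‖Y ω‖ ^ 2 - 2 * ⟪X ω, Y ω⟫) μ := hYY.sub hXY
  simp_rw [hexpand]
  rw [integral_add hdiff hXX, integral_sub hYY hXY, integral_const_mul, hcross]
  ring

theorem integral_comp_sub_smul_le (hm : m ≤ m0) {f : E → ℝ} {L η s : ℝ}
    (hf : Differentiable ℝ f) (hgrad : ∀ x y, ‖∇ f x - ∇ f y‖ ≤ L * ‖x - y‖) (hL : 0 ≤ L)
    {θ θ' g : Ω → E} (hθm : StronglyMeasurable[m] θ) (hθ : MemLp θ 2 μ) (hg : MemLp g 2 μ)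
    (hfθ : Integrable (fun ω => f (θ ω)) μ) (hfθ' : Integrable (fun ω => f (θ' ω)) μ)
    (hunb : μ[g | m] =ᵐ[μ] fun ω => ∇ f (θ ω))
    (hvar : ∫ ω, ‖g ω - ∇ f (θ ω)‖ ^ 2 ∂μ ≤ s) (hupd : ∀ᵐ ω ∂μ, θ' ω = θ ω - η • g ω) :
    (η - L * η ^ 2 / 2) * ∫ ω, ‖∇ f (θ ω)‖ ^ 2 ∂μ
      ≤ ∫ ω, f (θ ω) ∂μ - ∫ ω, f (θ' ω) ∂μ + L * η ^ 2 / 2 * s := by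
  have hXm : StronglyMeasurable[m] fun ω => ∇ f (θ ω) :=
    (lipschitzWith_gradient hgrad).continuous.comp_stronglyMeasurable hθm
  have hX : MemLp (fun ω => ∇ f (θ ω)) 2 μ :=
    (lipschitzWith_gradient hgrad).comp_memLp_of_isFiniteMeasure hθ
  have hcross := integral_inner_eq_integral_norm_sq_of_condExp hm hXm hX hg hunb
  have hsplit := integral_norm_sq_eq_add_of_condExp hm hXm hX hg hunb
  have hpointwise : ∀ᵐ ω ∂μ, f (θ' ω)
      ≤ f (θ ω) - η * ⟪∇ f (θ ω), g ω⟫ + L / 2 * η ^ 2 * ‖g ω‖ ^ 2 := by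
    filter_upwards [hupd] with ω hω
    have := le_add_inner_gradient_add_sq hf hgrad (θ ω) (-(η • g ω))
    rw [← sub_eq_add_neg, inner_neg_right, real_inner_smul_right, norm_neg, norm_smul,
      Real.norm_eq_abs, mul_pow, sq_abs] at this
    rw [hω]; linarith
  have hXg := (hX.integrable_inner hg).const_mul η
  have hgg := hg.norm.integrable_sq.const_mul (L / 2 * η ^ 2)
  have hfθXg : Integrable (fun ω => f (θ ω) - η * ⟪∇ f (θ ω), g ω⟫) μ := hfθ.sub hXg
  have hmono : ∫ ω, f (θ' ω) ∂μ
      ≤ ∫ ω, (f (θ ω) - η * ⟪∇ f (θ ω), g ω⟫ + L / 2 * η ^ 2 * ‖g ω‖ ^ 2) ∂μ :=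
    integral_mono_ae hfθ' (hfθXg.add hgg) hpointwise
  rw [integral_add hfθXg hgg, integral_sub hfθ hXg, integral_const_mul,
    integral_const_mul, hcross, hsplit] at hmono
  have hvar' := mul_le_mul_of_nonneg_left hvar (by positivity : 0 ≤ L / 2 * η ^ 2)
  linarith

end ConditionalExpectation

theorem inf'_range_le_of_weighted_descent {T : ℕ} (hT : (range T).Nonempty)
    {η A F e : ℕ → ℝ} {c Fmin : ℝ} (hc : 0 < c) (hη : ∀ t ∈ range T, 0 ≤ η t)
    (hS : 0 < ∑ t ∈ range T, η t) (hF : Fmin ≤ F T)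
    (hstep : ∀ t ∈ range T, c * (η t * A t) ≤ F t - F (t + 1) + e t) :
    (range T).inf' hT A ≤ (F 0 - Fmin + ∑ t ∈ range T, e t) / (c * ∑ t ∈ range T, η t) := by
  rw [le_div_iff₀ (mul_pos hc hS)]
  calc (range T).inf' hT A * (c * ∑ t ∈ range T, η t)
      = c * ∑ t ∈ range T, η t * (range T).inf' hT A := by rw [← sum_mul]; ring
    _ ≤ c * ∑ t ∈ range T, η t * A t := by
        gcongr with t ht
        exacts [hη t ht, inf'_le A ht]
    _ = ∑ t ∈ range T, c * (η t * A t) := mul_sum _ _ _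
    _ ≤ ∑ t ∈ range T, (F t - F (t + 1) + e t) := sum_le_sum hstep
    _ ≤ F 0 - Fmin + ∑ t ∈ range T, e t := by
        rw [sum_add_distrib, sum_range_sub']; linarith

/-- Convergence bound for mini-batch SGD (Lemma 1): if `f` is differentiable, `L`-smooth and
bounded below by `f*`, the iterates satisfy `θ_{t+1} = θ_t − η_t g_t` with conditionally
unbiased stochastic gradients of conditional variance at most `σ²/b_t`, and the learning
rates lie in `[η_min, η_max] ⊆ [0, 2/L)`, then
`min_{t<T} E[‖∇f(θ_t)‖²]` is bounded by the stated quantity. -/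
theorem minibatch_sgd_convergence
    {Ω : Type*} [m0 : MeasurableSpace Ω] (P : Measure Ω) [IsProbabilityMeasure P]
    (ℱ : Filtration ℕ m0)
    (d : ℕ) (f : EuclideanSpace ℝ (Fin d) → ℝ) (L : ℝ) (hL : 0 < L)
    (hdiff : Differentiable ℝ f)
    (hsmooth : ∀ θ₁ θ₂ : EuclideanSpace ℝ (Fin d),
      ‖gradient f θ₁ - gradient f θ₂‖ ≤ L * ‖θ₁ - θ₂‖)
    (fstar : ℝ) (hbound : ∀ θ', fstar ≤ f θ')
    (T : ℕ) (hT : 1 ≤ T) (σ : ℝ)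
    (b : ℕ → ℝ)
    (η : ℕ → ℝ) (ηmin ηmax : ℝ) (hηmin : 0 ≤ ηmin) (hηmax : ηmax < 2 / L)
    (hη : ∀ t, η t ∈ Set.Icc ηmin ηmax)
    (hηsum : ∑ t ∈ Finset.range T, η t ≠ 0)
    (θ₀ : EuclideanSpace ℝ (Fin d))
    (θ g : ℕ → Ω → EuclideanSpace ℝ (Fin d))
    (hθ₀ : θ 0 = fun _ => θ₀)
    (hθmeas : ∀ t, StronglyMeasurable[ℱ t] (θ t))
    (hgL2 : ∀ t, MemLp (g t) 2 P)
    (hunbiased : ∀ t, P[g t | ℱ t] =ᵐ[P] fun ω => gradient f (θ t ω))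
    (hvar : ∀ t,
      ∀ᵐ ω ∂P, (P[fun ω' => ‖g t ω' - gradient f (θ t ω')‖ ^ 2 | ℱ t]) ω ≤ σ ^ 2 / b t)
    (hupdate : ∀ t, ∀ᵐ ω ∂P, θ (t + 1) ω = θ t ω - η t • g t ω) :
    (Finset.range T).inf' (Finset.nonempty_range_iff.mpr (by omega))
        (fun t => ∫ ω, ‖gradient f (θ t ω)‖ ^ 2 ∂P)
      ≤ (2 * (f θ₀ - fstar) / (2 - L * ηmax)) * (1 / ∑ t ∈ Finset.range T, η t)
        + (L * σ ^ 2 / (2 - L * ηmax))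
          * ((∑ t ∈ Finset.range T, η t ^ 2 / b t) / (∑ t ∈ Finset.range T, η t)) := by
  have hκ : 0 < 2 - L * ηmax := by rw [lt_div_iff₀ hL] at hηmax; linarith
  have hη0 : ∀ t, 0 ≤ η t := fun t => hηmin.trans (hη t).1
  have hθL2 : ∀ t, MemLp (θ t) 2 P :=
    memLp_of_forall_ae_eq_sub_smul (by rw [hθ₀]; exact memLp_const θ₀) hgL2 hupdate
  have hfθ : ∀ t, Integrable (fun ω => f (θ t ω)) P := fun t =>
    integrable_comp_of_lipschitz_gradient hdiff hsmooth hbound (hθL2 t)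
  have hstep : ∀ t ∈ range T, (2 - L * ηmax) / 2 * (η t * ∫ ω, ‖∇ f (θ t ω)‖ ^ 2 ∂P)
      ≤ ∫ ω, f (θ t ω) ∂P - ∫ ω, f (θ (t + 1) ω) ∂P + L * σ ^ 2 / 2 * (η t ^ 2 / b t) := by
    intro t _
    have hdescent := integral_comp_sub_smul_le (ℱ.le t) hdiff hsmooth hL.le (hθmeas t) (hθL2 t)
      (hgL2 t) (hfθ t) (hfθ (t + 1)) (hunbiased t) (integral_le_of_ae_condExp_le (ℱ.le t) (hvar t))
      (hupdate t)
    have hrate : (2 - L * ηmax) / 2 * η t ≤ η t - L * η t ^ 2 / 2 := by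
      linarith [mul_le_mul_of_nonneg_left (hη t).2 (mul_nonneg hL.le (hη0 t))]
    have hA : 0 ≤ ∫ ω, ‖∇ f (θ t ω)‖ ^ 2 ∂P := integral_nonneg fun ω => by positivity
    calc _ = (2 - L * ηmax) / 2 * η t * ∫ ω, ‖∇ f (θ t ω)‖ ^ 2 ∂P := by ring
      _ ≤ _ := (mul_le_mul_of_nonneg_right hrate hA).trans hdescent
      _ = _ := by ring
  have hfT : fstar ≤ ∫ ω, f (θ T ω) ∂P := by
    simpa using integral_mono (integrable_const fstar) (hfθ T) fun ω => hbound (θ T ω)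
  refine (inf'_range_le_of_weighted_descent _ (half_pos hκ) (fun t _ => hη0 t)
    ((sum_nonneg fun t _ => hη0 t).lt_of_ne' hηsum) hfT hstep).trans_eq ?_
  simp only [hθ₀, integral_const, probReal_univ, one_smul, ← mul_sum]
  field_simp
end

section
/- Let C₁ > 0, C₂ > 0, ε > 0, and define N(b) := C₁ b²/(ε² b − C₂) for b ∈ (C₂/ε², ∞). Then N is strictly decreasing on (C₂/ε², 2C₂/ε²] and strictly increasing on [2C₂/ε², ∞). -/
/-!
With `a := C₂ / ε²` the complexity is `N b = (C₁ / ε²) · b² / (b - a)`, so it suffices to study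
`b ↦ b² / (b - a)` on `(a, ∞)`. For `a < x < y` the sign of `y²/(y - a) - x²/(x - a)` is that of
`(x - a)(y - a) - a²`, which is negative when `y - a ≤ a` and positive when `a ≤ x - a`;
the turning point is `b = 2a`, the critical batch size.
-/

open Set

theorem sq_mul_sub_sub_sq_mul_sub (a x y : ℝ) :
    x ^ 2 * (y - a) - y ^ 2 * (x - a) = (x - y) * ((x - a) * (y - a) - a ^ 2) := by
  ring

theorem strictAntiOn_sq_div_sub (a : ℝ) :
    StrictAntiOn (fun x : ℝ => x ^ 2 / (x - a)) (Ioc a (2 * a)) := by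
  rintro x ⟨hax, hx⟩ y ⟨hay, hy⟩ hxy
  have hdx : 0 < x - a := sub_pos.mpr hax
  have hdy : 0 < y - a := sub_pos.mpr hay
  have hprod : (x - a) * (y - a) < a ^ 2 := by nlinarith
  show y ^ 2 / (y - a) < x ^ 2 / (x - a)
  rw [div_lt_div_iff₀ hdy hdx, ← sub_pos, sq_mul_sub_sub_sq_mul_sub]
  exact mul_pos_of_neg_of_neg (sub_neg.mpr hxy) (sub_neg.mpr hprod)

theorem strictMonoOn_sq_div_sub {a : ℝ} (ha : 0 < a) :
    StrictMonoOn (fun x : ℝ => x ^ 2 / (x - a)) (Ici (2 * a)) := by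
  rintro x hx y hy hxy
  have hx : 2 * a ≤ x := hx
  have hdx : 0 < x - a := by linarith
  have hdy : 0 < y - a := by linarith
  have hprod : a ^ 2 < (y - a) * (x - a) := by nlinarith
  show x ^ 2 / (x - a) < y ^ 2 / (y - a)
  rw [div_lt_div_iff₀ hdx hdy, ← sub_pos, sq_mul_sub_sub_sq_mul_sub]
  exact mul_pos (sub_pos.mpr hxy) (sub_pos.mpr hprod)

/-- The SFO complexity `N(b) = C₁ b² / (ε² b − C₂)` is strictly decreasing on
`(C₂/ε², 2C₂/ε²]` and strictly increasing on `[2C₂/ε², ∞)`. -/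
theorem sfo_complexity_monotonicity
    (C₁ C₂ ε : ℝ) (hC₁ : 0 < C₁) (hC₂ : 0 < C₂) (hε : 0 < ε) :
    StrictAntiOn (fun b : ℝ => C₁ * b ^ 2 / (ε ^ 2 * b - C₂))
        (Set.Ioc (C₂ / ε ^ 2) (2 * C₂ / ε ^ 2)) ∧
    StrictMonoOn (fun b : ℝ => C₁ * b ^ 2 / (ε ^ 2 * b - C₂))
        (Set.Ici (2 * C₂ / ε ^ 2)) := by
  have hε2 : 0 < ε ^ 2 := by positivity
  have hk : 0 < C₁ / ε ^ 2 := div_pos hC₁ hε2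
  have hN : (fun b : ℝ => C₁ * b ^ 2 / (ε ^ 2 * b - C₂)) =
      fun b => C₁ / ε ^ 2 * (b ^ 2 / (b - C₂ / ε ^ 2)) := by
    funext b
    field_simp
  rw [hN, mul_div_assoc]
  exact ⟨fun x hx y hy hxy => mul_lt_mul_of_pos_left (strictAntiOn_sq_div_sub _ hx hy hxy) hk,
    fun x hx y hy hxy =>
      mul_lt_mul_of_pos_left (strictMonoOn_sq_div_sub (div_pos hC₂ hε2) hx hy hxy) hk⟩
end
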